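/- (Policy Gradient Norm Bounds, combined.) Let N ≥ 2, let a ∈ ℝ^N be a logits vector with softmax distribution p = softmax(a), let k be a fixed target index, and let w ∈ ℝ be a fixed scalar weight. Define J(a) = w · log(softmax(a)_k), let H(p) = −∑_{n=1}^N p_n log p_n, and let C_N = (N − 1)/(N (log N)²). Assume the collision-probability bound ∑_{n=1}^N p_n² ≤ 1 − C_N · H(p)². Then w² · (1 − 2 p_k + exp(−H(p))) ≤ ‖∇_a J‖² ≤ w² · (2 − 2 p_k − C_N · H(p)²). -/

import Mathlib

/-- The softmax distribution induced by a logits vector `a ∈ ℝ^N`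
(with the Euclidean structure). -/
noncomputable def softmax {N : ℕ} (a : EuclideanSpace ℝ (Fin N)) : Fin N → ℝ :=
  fun n => Real.exp (a n) / ∑ m, Real.exp (a m)

/-- The Shannon entropy (with natural logarithm) of a vector `p : ℝ^N`,
`H(p) = -∑ n, p n * log (p n)`. -/
noncomputable def shannonEntropy {N : ℕ} (p : Fin N → ℝ) : ℝ :=
  -∑ n, p n * Real.log (p n)

/-!
Since `log softmax(a)_k = a_k - log ∑ exp a_m` and the gradient of log-sum-exp is the softmax,
`∇_a J = w (e_k - p)`, so `‖∇_a J‖² = w² (1 - 2 p_k + ∑ p_n²)`. The upper bound is then the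
collision-probability hypothesis, and the lower bound is Jensen's inequality for `exp`,
`exp (∑ p_n log p_n) ≤ ∑ p_n exp (log p_n) = ∑ p_n²`.
-/

open Real

section Gradient

variable {F : Type*} [NormedAddCommGroup F] [InnerProductSpace ℝ F] [CompleteSpace F]
  {f g : F → ℝ} {f' g' x : F}

theorem HasGradientAt.const_mul (hf : HasGradientAt f f' x) (c : ℝ) :
    HasGradientAt (fun y => c * f y) (c • f') x := by
  rw [hasGradientAt_iff_hasFDerivAt] at hf ⊢
  simpa using hf.const_mul c

theorem HasGradientAt.sub (hf : HasGradientAt f f' x) (hg : HasGradientAt g g' x) :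
    HasGradientAt (fun y => f y - g y) (f' - g') x := by
  rw [hasGradientAt_iff_hasFDerivAt] at hf hg ⊢
  simpa using hf.fun_sub hg

end Gradient

namespace EuclideanSpace

variable {ι : Type*} [Fintype ι] [DecidableEq ι]

theorem hasGradientAt_apply (k : ι) (a : EuclideanSpace ℝ ι) :
    HasGradientAt (fun b : EuclideanSpace ℝ ι => b k) (single k 1) a := by
  rw [hasGradientAt_iff_hasFDerivAt]
  refine (proj (𝕜 := ℝ) k).hasFDerivAt.congr_fderiv ?_
  ext v
  simp [inner_single_left]

theorem norm_single_one_sub_sq (k : ι) (p : EuclideanSpace ℝ ι) :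
    ‖single k (1 : ℝ) - p‖ ^ 2 = 1 - 2 * p k + ∑ n, p n ^ 2 := by
  rw [norm_sub_sq_real, inner_single_left, norm_sq_eq p]
  simp

end EuclideanSpace

theorem exp_neg_shannonEntropy_le_sum_sq {N : ℕ} {p : Fin N → ℝ} (hp : ∀ n, 0 ≤ p n)
    (hp₁ : ∑ n, p n = 1) : exp (-shannonEntropy p) ≤ ∑ n, p n ^ 2 := by
  have hexp_log : ∀ n, p n * exp (log (p n)) = p n ^ 2 := fun n => by
    rcases (hp n).eq_or_lt with h | h
    · simp [← h]
    · rw [exp_log h, sq]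
  calc exp (-shannonEntropy p) = exp (∑ n, p n • log (p n)) := by simp [shannonEntropy]
    _ ≤ ∑ n, p n • exp (log (p n)) :=
      convexOn_exp.map_sum_le (fun n _ => hp n) hp₁ (fun n _ => Set.mem_univ _)
    _ = ∑ n, p n ^ 2 := by simp only [smul_eq_mul, hexp_log]

section Softmax

variable {N : ℕ} (a : EuclideanSpace ℝ (Fin N))

theorem sum_exp_pos [Nonempty (Fin N)] : 0 < ∑ m, exp (a m) :=
  Finset.sum_pos (fun _ _ => exp_pos _) Finset.univ_nonempty

theorem softmax_pos (n : Fin N) : 0 < softmax a n :=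
  have : Nonempty (Fin N) := ⟨n⟩
  div_pos (exp_pos _) (sum_exp_pos a)

theorem sum_softmax [Nonempty (Fin N)] : ∑ n, softmax a n = 1 := by
  simp only [softmax, ← Finset.sum_div, div_self (sum_exp_pos a).ne']

theorem log_softmax (k : Fin N) : log (softmax a k) = a k - log (∑ m, exp (a m)) := by
  have : Nonempty (Fin N) := ⟨k⟩
  rw [softmax, log_div (exp_ne_zero _) (sum_exp_pos a).ne', log_exp]

theorem hasGradientAt_log_sum_exp [Nonempty (Fin N)] :
    HasGradientAt (fun b : EuclideanSpace ℝ (Fin N) => log (∑ m, exp (b m)))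
      (WithLp.toLp 2 (softmax a)) a := by
  rw [hasGradientAt_iff_hasFDerivAt]
  have hsum : HasFDerivAt (fun b : EuclideanSpace ℝ (Fin N) => ∑ m, exp (b m))
      (∑ m, exp (a m) • EuclideanSpace.proj (𝕜 := ℝ) m) a :=
    HasFDerivAt.fun_sum fun m _ => (EuclideanSpace.proj m).hasFDerivAt.exp
  refine (hsum.log (sum_exp_pos a).ne').congr_fderiv ?_
  ext v
  simp only [smul_apply, sum_apply, PiLp.proj_apply, smul_eq_mul, Finset.mul_sum,
    InnerProductSpace.toDual_apply_apply, PiLp.inner_apply, softmax, div_eq_inv_mul,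
    RCLike.inner_apply, conj_trivial]
  exact Finset.sum_congr rfl fun m _ => by ring

theorem hasGradientAt_log_softmax (k : Fin N) :
    HasGradientAt (fun b : EuclideanSpace ℝ (Fin N) => log (softmax b k))
      (EuclideanSpace.single k 1 - WithLp.toLp 2 (softmax a)) a := by
  have : Nonempty (Fin N) := ⟨k⟩
  simp only [log_softmax]
  exact (EuclideanSpace.hasGradientAt_apply k a).sub (hasGradientAt_log_sum_exp a)

end Softmax

theorem policy_gradient_norm_bounds_general
    (N : ℕ) (a : EuclideanSpace ℝ (Fin N)) (k : Fin N) (w : ℝ)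
    (hcoll : ∑ n, (softmax a n) ^ 2
      ≤ 1 - ((N : ℝ) - 1) / ((N : ℝ) * Real.log N ^ 2)
            * (shannonEntropy (softmax a)) ^ 2) :
    w ^ 2 * (1 - 2 * softmax a k + Real.exp (-(shannonEntropy (softmax a))))
      ≤ ‖gradient (fun a : EuclideanSpace ℝ (Fin N) => w * Real.log (softmax a k)) a‖ ^ 2 ∧
    ‖gradient (fun a : EuclideanSpace ℝ (Fin N) => w * Real.log (softmax a k)) a‖ ^ 2
      ≤ w ^ 2 * (2 - 2 * softmax a k
          - ((N : ℝ) - 1) / ((N : ℝ) * Real.log N ^ 2)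
              * (shannonEntropy (softmax a)) ^ 2) := by
  have : Nonempty (Fin N) := ⟨k⟩
  have hnorm : ‖gradient (fun a : EuclideanSpace ℝ (Fin N) => w * log (softmax a k)) a‖ ^ 2
      = w ^ 2 * (1 - 2 * softmax a k + ∑ n, softmax a n ^ 2) := by
    rw [((hasGradientAt_log_softmax a k).const_mul w).gradient, norm_smul, mul_pow,
      Real.norm_eq_abs, sq_abs, EuclideanSpace.norm_single_one_sub_sq]
  have hjensen := exp_neg_shannonEntropy_le_sum_sq (fun n => (softmax_pos a n).le) (sum_softmax a)
  rw [hnorm]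
  exact ⟨by gcongr, by gcongr; linarith⟩

/-- Policy gradient norm bounds, combined: for `J(a) = w · log (softmax a k)`,
`p = softmax a` and `C_N = (N-1)/(N (log N)²)`, assuming the collision-probability
bound `∑ n, p n² ≤ 1 - C_N H(p)²`, we have
`w² (1 - 2 p_k + exp (-H(p))) ≤ ‖∇_a J‖² ≤ w² (2 - 2 p_k - C_N H(p)²)`. -/
theorem policy_gradient_norm_bounds
    (N : ℕ) (hN : 2 ≤ N) (a : EuclideanSpace ℝ (Fin N)) (k : Fin N) (w : ℝ)
    (hcoll : ∑ n, (softmax a n) ^ 2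
      ≤ 1 - ((N : ℝ) - 1) / ((N : ℝ) * Real.log N ^ 2)
            * (shannonEntropy (softmax a)) ^ 2) :
    w ^ 2 * (1 - 2 * softmax a k + Real.exp (-(shannonEntropy (softmax a))))
      ≤ ‖gradient (fun a : EuclideanSpace ℝ (Fin N) => w * Real.log (softmax a k)) a‖ ^ 2 ∧
    ‖gradient (fun a : EuclideanSpace ℝ (Fin N) => w * Real.log (softmax a k)) a‖ ^ 2
      ≤ w ^ 2 * (2 - 2 * softmax a k
          - ((N : ℝ) - 1) / ((N : ℝ) * Real.log N ^ 2)
              * (shannonEntropy (softmax a)) ^ 2) :=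
  policy_gradient_norm_bounds_general N a k w hcoll
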